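/- arXiv:2002.12770 — 3 statements merged into one kernel-verified Lean document; each statement's English description precedes it below -/
import Mathlib

section
/- Let c ≥ 0 and n̄ > 0, and let a, a' ∈ [0,∞)^N satisfy a_n ≤ a'_n for all n. If n̄ Σ_{n=1}^{N} (1 − (1+a_n)^{-2}) ≥ c², then F_c(a) ≤ F_c(a'). In other words, F_c is coordinatewise nondecreasing on the (upward-closed) region {a ∈ [0,∞)^N : n̄ Σ_n (1 − (1+a_n)^{-2}) ≥ c²}. -/
/-!
Write `D(a) = n̄ Σ (1 − (1+aₙ)⁻²)`, so that `F_c(a) = n̄ Σ ln(1+aₙ) − c √D(a)`. Raising `a` to `a'`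
raises the dispersion from `X = D(a)` to `Y = D(a')`, and since `c ≤ √X`,
`c (√Y − √X) ≤ √X (√Y − √X) ≤ (Y − X)/2`. Termwise, `x⁻² − y⁻² ≤ 2 (ln y − ln x)` for `1 ≤ x ≤ y`,
so `(Y − X)/2` is at most the gain `n̄ Σ (ln(1+a'ₙ) − ln(1+aₙ))` of the logarithmic part.
-/

noncomputable section

/-- `F_c(a) = n̄ Σ_n ln(1+a_n) − c √(n̄ Σ_n (1 − (1+a_n)⁻²))`. -/
def Ffun {N : ℕ} (nbar c : ℝ) (a : Fin N → ℝ) : ℝ :=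
  nbar * ∑ n, Real.log (1 + a n) -
    c * Real.sqrt (nbar * ∑ n, (1 - ((1 + a n) ^ 2)⁻¹))

open Finset Real

/-- With `u = x⁻¹ ≥ v = y⁻¹` in `(0, 1]`: `u² − v² ≤ 2 (u − v)` and `u − v ≤ (u − v)/u ≤ ln (u/v)`. -/
lemma inv_sq_sub_inv_sq_le_two_mul_log_sub {x y : ℝ} (hx : 1 ≤ x) (hxy : x ≤ y) :
    (x ^ 2)⁻¹ - (y ^ 2)⁻¹ ≤ 2 * (log y - log x) := by
  have hx0 : 0 < x := by linarith
  have hy0 : 0 < y := by linarith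
  have hlog : 1 - x / y ≤ log y - log x := by
    have h := log_le_sub_one_of_pos (div_pos hx0 hy0)
    rw [log_div hx0.ne' hy0.ne'] at h
    linarith
  have hv : y⁻¹ ≤ x⁻¹ := inv_anti₀ hx0 hxy
  have hu : x⁻¹ ≤ 1 := inv_le_one_of_one_le₀ hx
  have hv0 : 0 < y⁻¹ := inv_pos.mpr hy0
  have hsub : x⁻¹ - y⁻¹ ≤ 1 - x / y := by
    have : x⁻¹ - y⁻¹ = x⁻¹ * (1 - x / y) := by field_simp
    rw [this]
    exact mul_le_of_le_one_left (by rw [sub_nonneg, div_le_one hy0]; exact hxy) hu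
  have hsq : (x ^ 2)⁻¹ - (y ^ 2)⁻¹ ≤ 2 * (x⁻¹ - y⁻¹) := by
    rw [← inv_pow, ← inv_pow]
    nlinarith
  linarith

lemma mul_sqrt_sub_mul_sqrt_le {c X Y : ℝ} (hcX : c ^ 2 ≤ X) (hXY : X ≤ Y) :
    c * √Y - c * √X ≤ (Y - X) / 2 := by
  have hX0 : 0 ≤ X := (sq_nonneg c).trans hcX
  have hc : c ≤ √X := (le_abs_self c).trans (abs_le_sqrt hcX)
  have hsqrt : √X ≤ √Y := sqrt_le_sqrt hXY
  have hsX : √X ^ 2 = X := sq_sqrt hX0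
  have hsY : √Y ^ 2 = Y := sq_sqrt (hX0.trans hXY)
  nlinarith [sq_nonneg (√Y - √X), mul_le_mul_of_nonneg_right hc (sub_nonneg.mpr hsqrt)]

section Dispersion

variable {ι : Type*} [Fintype ι] {nbar : ℝ} {a a' : ι → ℝ}

def dispersion (nbar : ℝ) (a : ι → ℝ) : ℝ :=
  nbar * ∑ n, (1 - ((1 + a n) ^ 2)⁻¹)

lemma dispersion_sub_dispersion (nbar : ℝ) (a a' : ι → ℝ) :
    dispersion nbar a' - dispersion nbar a =
      nbar * ∑ n, (((1 + a n) ^ 2)⁻¹ - ((1 + a' n) ^ 2)⁻¹) := by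
  simp only [dispersion, ← mul_sub, ← sum_sub_distrib, sub_sub_sub_cancel_left]

lemma dispersion_mono (hnbar : 0 ≤ nbar) (ha0 : ∀ n, 0 ≤ a n) (hle : ∀ n, a n ≤ a' n) :
    dispersion nbar a ≤ dispersion nbar a' := by
  rw [← sub_nonneg, dispersion_sub_dispersion]
  refine mul_nonneg hnbar (sum_nonneg fun n _ => sub_nonneg.mpr ?_)
  exact inv_anti₀ (by have := ha0 n; positivity) (pow_le_pow_left₀ (by linarith [ha0 n])
    (by linarith [hle n]) 2)

lemma dispersion_sub_dispersion_le (hnbar : 0 ≤ nbar) (ha0 : ∀ n, 0 ≤ a n)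
    (hle : ∀ n, a n ≤ a' n) :
    (dispersion nbar a' - dispersion nbar a) / 2 ≤
      nbar * ∑ n, log (1 + a' n) - nbar * ∑ n, log (1 + a n) := by
  rw [dispersion_sub_dispersion, ← mul_sub, ← sum_sub_distrib, mul_div_assoc, sum_div]
  gcongr with n
  have := inv_sq_sub_inv_sq_le_two_mul_log_sub (by linarith [ha0 n] : 1 ≤ 1 + a n)
    (by linarith [hle n] : 1 + a n ≤ 1 + a' n)
  linarith

end Dispersion

theorem Ffun_mono_of_dispersion_ge_general
    {N : ℕ} (nbar c : ℝ) (hnbar : 0 < nbar)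
    (a a' : Fin N → ℝ) (ha0 : ∀ n, 0 ≤ a n) (hle : ∀ n, a n ≤ a' n)
    (hdisp : c ^ 2 ≤ nbar * ∑ n, (1 - ((1 + a n) ^ 2)⁻¹)) :
    Ffun nbar c a ≤ Ffun nbar c a' := by
  have hsqrt := mul_sqrt_sub_mul_sqrt_le hdisp (dispersion_mono hnbar.le ha0 hle)
  have hlog := dispersion_sub_dispersion_le hnbar.le ha0 hle
  simp only [Ffun]
  simp only [dispersion] at hsqrt hlog
  linarith

/-- Let `c ≥ 0`, `n̄ > 0`, and `0 ≤ a ≤ a'` pointwise. If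
`n̄ Σ_n (1 − (1+a_n)⁻²) ≥ c²`, then `F_c(a) ≤ F_c(a')`: `F_c` is coordinatewise
nondecreasing on the upward-closed region where the dispersion sum is at least `c²`. -/
theorem Ffun_mono_of_dispersion_ge
    {N : ℕ} (nbar c : ℝ) (hnbar : 0 < nbar) (hc : 0 ≤ c)
    (a a' : Fin N → ℝ) (ha0 : ∀ n, 0 ≤ a n) (hle : ∀ n, a n ≤ a' n)
    (hdisp : c ^ 2 ≤ nbar * ∑ n, (1 - ((1 + a n) ^ 2)⁻¹)) :
    Ffun nbar c a ≤ Ffun nbar c a' :=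
  Ffun_mono_of_dispersion_ge_general nbar c hnbar a a' ha0 hle hdisp

end
end

section
/- The function Φ(a) := √(Σ_{n=1}^{N} (1 − (1+a_n)^{-2})) is concave on [0,∞)^N; that is, for all a, a' ∈ [0,∞)^N and all t ∈ [0,1], Φ(t·a + (1−t)·a') ≥ t·Φ(a) + (1−t)·Φ(a'). -/
noncomputable section

/-- `Φ(a) = √(Σ_n (1 − (1+a_n)⁻²))`, the square root of the sum of the per-symbol
channel dispersions. -/
def Phi {N : ℕ} (a : Fin N → ℝ) : ℝ :=
  Real.sqrt (∑ n, (1 - ((1 + a n) ^ 2)⁻¹))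

/-!
Each dispersion `x ↦ 1 − (1+x)⁻²` is concave on `(-1, ∞)`, because `y ↦ y⁻²` is convex on
`(0, ∞)`, and it is nonnegative for `x ≥ 0`. Hence the sum of the dispersions is a nonnegative
concave function on `[0,∞)^N`, and composing it with the concave, monotone `√` keeps it concave.
-/

open Set

theorem concaveOn_finset_sum {𝕜 E β ι : Type*} [Semiring 𝕜] [PartialOrder 𝕜]
    [AddCommMonoid E] [AddCommMonoid β] [PartialOrder β] [IsOrderedAddMonoid β]
    [SMul 𝕜 E] [Module 𝕜 β] {s : Set E} (hs : Convex 𝕜 s) (t : Finset ι)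
    {f : ι → E → β} (hf : ∀ i ∈ t, ConcaveOn 𝕜 s (f i)) :
    ConcaveOn 𝕜 s fun x => ∑ i ∈ t, f i x := by
  classical
  induction t using Finset.induction_on with
  | empty => simpa only [Finset.sum_empty] using concaveOn_const (0 : β) hs
  | insert i t hi ih =>
    simp only [Finset.sum_insert hi]
    exact (hf i (t.mem_insert_self i)).add (ih fun j hj => hf j (Finset.mem_insert_of_mem hj))

theorem ConcaveOn.sqrt {E : Type*} [AddCommMonoid E] [Module ℝ E] {s : Set E} {f : E → ℝ}
    (hf : ConcaveOn ℝ s f) (hf₀ : ∀ x ∈ s, 0 ≤ f x) : ConcaveOn ℝ s fun x => √(f x) := by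
  refine ⟨hf.1, fun x hx y hy a b ha hb hab => ?_⟩
  calc a • √(f x) + b • √(f y) ≤ √(a • f x + b • f y) :=
        Real.strictConcaveOn_sqrt.concaveOn.2 (hf₀ x hx) (hf₀ y hy) ha hb hab
    _ ≤ √(f (a • x + b • y)) := Real.sqrt_le_sqrt (hf.2 hx hy ha hb hab)

theorem ConcaveOn.comp_eval {𝕜 E β ι : Type*} [Semiring 𝕜] [PartialOrder 𝕜]
    [AddCommMonoid E] [AddCommMonoid β] [PartialOrder β] [Module 𝕜 E] [SMul 𝕜 β]
    {s : Set E} {g : E → β} (hg : ConcaveOn 𝕜 s g) (i : ι) :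
    ConcaveOn 𝕜 ((fun a : ι → E => a i) ⁻¹' s) fun a => g (a i) :=
  hg.comp_linearMap (LinearMap.proj (R := 𝕜) (φ := fun _ : ι => E) i)

theorem concaveOn_one_sub_inv_one_add_sq :
    ConcaveOn ℝ (Ioi (-1)) fun x : ℝ => 1 - ((1 + x) ^ 2)⁻¹ := by
  have hconv := (convexOn_zpow (𝕜 := ℝ) (-2)).translate_right 1
  have hpre : (fun z : ℝ => 1 + z) ⁻¹' Ioi 0 = Ioi (-1) := by
    ext x
    simp [neg_lt_iff_pos_add']
  rw [hpre] at hconv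
  exact ((concaveOn_const 1 (convex_Ioi (-1))).sub hconv).congr fun x _ => by simp

theorem one_sub_inv_one_add_sq_nonneg {x : ℝ} (hx : 0 ≤ x) : 0 ≤ 1 - ((1 + x) ^ 2)⁻¹ :=
  sub_nonneg.2 (inv_le_one_of_one_le₀ (one_le_pow₀ (le_add_of_nonneg_right hx)))

theorem concaveOn_Phi {N : ℕ} : ConcaveOn ℝ (univ.pi fun _ => Ici 0) (Phi (N := N)) := by
  have hs : Convex ℝ (univ.pi fun _ : Fin N => Ici (0 : ℝ)) := convex_pi fun _ _ => convex_Ici 0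
  have hcoord (n : Fin N) :
      ConcaveOn ℝ (univ.pi fun _ => Ici 0) fun a : Fin N → ℝ => 1 - ((1 + a n) ^ 2)⁻¹ :=
    (concaveOn_one_sub_inv_one_add_sq.comp_eval n).subset
      (fun a ha => show -1 < a n from neg_one_lt_zero.trans_le (ha n (mem_univ n))) hs
  exact (concaveOn_finset_sum hs _ fun n _ => hcoord n).sqrt fun a ha =>
    Finset.sum_nonneg fun n _ => one_sub_inv_one_add_sq_nonneg (ha n (mem_univ n))

theorem Phi_concave_on_nonneg_general
    {N : ℕ}
    (a a' : Fin N → ℝ) (ha : ∀ n, 0 ≤ a n) (ha' : ∀ n, 0 ≤ a' n)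
    (t : ℝ) (ht0 : 0 ≤ t) (ht1 : t ≤ 1) :
    t * Phi a + (1 - t) * Phi a' ≤ Phi (fun n => t * a n + (1 - t) * a' n) :=
  concaveOn_Phi.2 (fun n _ => ha n) (fun n _ => ha' n) ht0 (sub_nonneg.2 ht1) (add_sub_cancel t 1)

/-- `Φ` is concave on `[0,∞)^N`: for all `a, a' ∈ [0,∞)^N` and
`t ∈ [0,1]`, `Φ(t·a + (1−t)·a') ≥ t·Φ(a) + (1−t)·Φ(a')`. -/
theorem Phi_concave_on_nonneg
    {N : ℕ} (hN : 0 < N)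
    (a a' : Fin N → ℝ) (ha : ∀ n, 0 ≤ a n) (ha' : ∀ n, 0 ≤ a' n)
    (t : ℝ) (ht0 : 0 ≤ t) (ht1 : t ≤ 1) :
    t * Phi a + (1 - t) * Phi a' ≤ Phi (fun n => t * a n + (1 - t) * a' n) :=
  Phi_concave_on_nonneg_general a a' ha ha' t ht0 ht1

end
end

section
/- Let c ≥ 0, n̄ > 0, and let b⁰ ∈ [0,∞)^N satisfy Σ_{n=1}^{N} (1 − (1+b⁰_n)^{-2}) > 0. Then for every b ∈ [0,∞)^N, the first-order Taylor expansion of E_c at b⁰ is a global overestimator: E_c(b) ≤ E_c(b⁰) + Σ_{m=1}^{N} [ n̄/(1+b⁰_m) + c·n̄·(1+b⁰_m)^{-3} / √(n̄ Σ_{n=1}^{N} (1 − (1+b⁰_n)^{-2})) ] · (b_m − b⁰_m). Consequently, if a real number τ is at least this linearization at b, then τ ≥ E_c(b). -/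
noncomputable section

/-- `E_c(b) = n̄ Σ_n ln(1+b_n) + c √(n̄ Σ_n (1 − (1+b_n)⁻²))`. -/
def Efun {N : ℕ} (nbar c : ℝ) (b : Fin N → ℝ) : ℝ :=
  nbar * ∑ n, Real.log (1 + b n) +
    c * Real.sqrt (nbar * ∑ n, (1 - ((1 + b n) ^ 2)⁻¹))

/-!
`E_c` is concave on `[0,∞)^N`, so it lies below its tangent planes. Concretely, `ln`,
`u ↦ 1 - u⁻²` (for `u > 0`) and `√` each lie below their tangent lines; summing the first two
and feeding the second sum into the tangent line of `√`, which is increasing since `c ≥ 0`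
and `n̄ > 0`, gives the tangent plane of `E_c` at `b⁰`.
-/

open Finset Real

lemma log_le_log_add_sub_div {x y : ℝ} (hx : 0 < x) (hy : 0 < y) :
    log y ≤ log x + (y - x) / x := by
  have h := log_le_sub_one_of_pos (div_pos hy hx)
  rw [log_div hy.ne' hx.ne', sub_div, div_self hx.ne'] at *
  linarith

lemma one_sub_inv_sq_le {u v : ℝ} (hu : 0 < u) (hv : 0 < v) :
    1 - (u ^ 2)⁻¹ ≤ 1 - (v ^ 2)⁻¹ + 2 * (v ^ 3)⁻¹ * (u - v) := by
  have gap : 1 - (v ^ 2)⁻¹ + 2 * (v ^ 3)⁻¹ * (u - v) - (1 - (u ^ 2)⁻¹)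
      = (u - v) ^ 2 * (2 * u + v) / (u ^ 2 * v ^ 3) := by
    field_simp
    ring
  have : 0 ≤ (u - v) ^ 2 * (2 * u + v) / (u ^ 2 * v ^ 3) := by positivity
  linarith

lemma sqrt_le_sqrt_add_sub_div {x x₀ : ℝ} (hx : 0 ≤ x) (hx₀ : 0 < x₀) :
    √x ≤ √x₀ + (x - x₀) / (2 * √x₀) := by
  have hs₀ : 0 < √x₀ := sqrt_pos.mpr hx₀
  rw [← sub_le_iff_le_add', le_div_iff₀ (by positivity)]
  nlinarith [sq_nonneg (√x - √x₀), sq_sqrt hx, sq_sqrt hx₀.le]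

section Sums

variable {ι : Type*} [Fintype ι] {b b₀ : ι → ℝ}

lemma sum_log_one_add_le (hb : ∀ i, -1 < b i) (hb₀ : ∀ i, -1 < b₀ i) :
    ∑ i, log (1 + b i) ≤ ∑ i, log (1 + b₀ i) + ∑ i, (b i - b₀ i) / (1 + b₀ i) := by
  rw [← sum_add_distrib]
  gcongr with i
  simpa using log_le_log_add_sub_div (neg_lt_iff_pos_add'.mp (hb₀ i))
    (neg_lt_iff_pos_add'.mp (hb i))

lemma sum_one_sub_inv_sq_sub_le (hb : ∀ i, -1 < b i) (hb₀ : ∀ i, -1 < b₀ i) :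
    ∑ i, (1 - ((1 + b i) ^ 2)⁻¹) - ∑ i, (1 - ((1 + b₀ i) ^ 2)⁻¹) ≤
      ∑ i, 2 * ((1 + b₀ i) ^ 3)⁻¹ * (b i - b₀ i) := by
  rw [← sum_sub_distrib]
  gcongr with i
  have := one_sub_inv_sq_le (neg_lt_iff_pos_add'.mp (hb i)) (neg_lt_iff_pos_add'.mp (hb₀ i))
  rw [add_sub_add_left_eq_sub] at this
  linarith

lemma sum_one_sub_inv_sq_nonneg (hb : ∀ i, 0 ≤ b i) :
    0 ≤ ∑ i, (1 - ((1 + b i) ^ 2)⁻¹) :=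
  sum_nonneg fun i _ => sub_nonneg.mpr <| inv_le_one_of_one_le₀ <|
    one_le_pow₀ (le_add_of_nonneg_right (hb i))

end Sums

/-- The first-order Taylor expansion of `E_c` at a point
`b⁰ ∈ [0,∞)^N` with strictly positive dispersion sum is a global overestimator of
`E_c` on `[0,∞)^N`; consequently any `τ` dominating the linearization dominates `E_c(b)`.
The coefficients are the partial derivatives `∂E_c/∂b_m` at `b⁰`. -/
theorem Efun_taylor_overestimates
    {N : ℕ} (nbar c : ℝ) (hnbar : 0 < nbar) (hc : 0 ≤ c)
    (b0 : Fin N → ℝ) (hb0 : ∀ n, 0 ≤ b0 n)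
    (hpos : 0 < ∑ n, (1 - ((1 + b0 n) ^ 2)⁻¹)) :
    ∀ b : Fin N → ℝ, (∀ n, 0 ≤ b n) →
      (Efun nbar c b ≤ Efun nbar c b0 +
        ∑ m, (nbar / (1 + b0 m) +
            c * nbar * ((1 + b0 m) ^ 3)⁻¹ /
              Real.sqrt (nbar * ∑ n, (1 - ((1 + b0 n) ^ 2)⁻¹))) * (b m - b0 m)) ∧
      (∀ τ : ℝ,
        Efun nbar c b0 +
          ∑ m, (nbar / (1 + b0 m) +
              c * nbar * ((1 + b0 m) ^ 3)⁻¹ /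
                Real.sqrt (nbar * ∑ n, (1 - ((1 + b0 n) ^ 2)⁻¹))) * (b m - b0 m) ≤ τ →
        Efun nbar c b ≤ τ) := by
  intro b hb
  have hb0' : ∀ n, -1 < b0 n := fun n => by linarith [hb0 n]
  have hb' : ∀ n, -1 < b n := fun n => by linarith [hb n]
  set S₀ := ∑ n, (1 - ((1 + b0 n) ^ 2)⁻¹)
  set T := ∑ n, 2 * ((1 + b0 n) ^ 3)⁻¹ * (b n - b0 n)
  have hsqrt : √(nbar * ∑ n, (1 - ((1 + b n) ^ 2)⁻¹)) ≤
      √(nbar * S₀) + nbar * T / (2 * √(nbar * S₀)) :=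
    (sqrt_le_sqrt_add_sub_div (mul_nonneg hnbar.le (sum_one_sub_inv_sq_nonneg hb))
      (mul_pos hnbar hpos)).trans <| by
        rw [← mul_sub]
        gcongr
        exact sum_one_sub_inv_sq_sub_le hb' hb0'
  have key : Efun nbar c b ≤ Efun nbar c b0 +
      ∑ m, (nbar / (1 + b0 m) + c * nbar * ((1 + b0 m) ^ 3)⁻¹ / √(nbar * S₀)) *
        (b m - b0 m) :=
    calc Efun nbar c b
      _ ≤ nbar * (∑ n, log (1 + b0 n) + ∑ n, (b n - b0 n) / (1 + b0 n)) +
          c * (√(nbar * S₀) + nbar * T / (2 * √(nbar * S₀))) := by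
        unfold Efun
        gcongr
        exact sum_log_one_add_le hb' hb0'
      _ = Efun nbar c b0 + (nbar * ∑ n, (b n - b0 n) / (1 + b0 n) +
            c * (nbar * T / (2 * √(nbar * S₀)))) := by
        unfold Efun; ring
      _ = _ := by
        congr 1
        simp only [T, mul_sum, sum_div, ← sum_add_distrib]
        refine sum_congr rfl fun m _ => ?_
        field_simp
  exact ⟨key, fun τ h => key.trans h⟩

end
end
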